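/- The sum of the displacement fields of two wedge dislocations with deficit angles ±θ at (0, ±a), expanded to first order in θ and a/r, equals (up to a constant translation) the edge-dislocation field u_x = b[arctan(y/x) + (1/(2(1−σ))) xy/(x²+y²)], u_y = −b[((1−2σ)/(2(1−σ))) ln(r/(eR)) + (1/(2(1−σ))) x²/(x²+y²)], with b = −2aθ. -/

import Mathlib

/-! With `t = a y / r²` the wedge logarithms have arguments `r ∓ a sin φ = r (1 ∓ t)`, so both
split off the common `log (r / (e R))`. Using `1 / (2 (1 - σ)) = 1 - c`, the differences from the
edge field (after removing the translation `v = 2acθ` from `u_y`) are then exactly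
`θ c x (log (1 + t) - log (1 - t) - 2t)` and
`θ c (y (log (1 + t) - log (1 - t) - 2t) + a log (1 - t²))`.
Since `|t| ≤ a / r ≤ 1/2`, the Taylor remainders of `log` near `1` make both `O(a³ / r²)`. -/

open Real

lemma pow_div_one_sub_le_two_mul {x : ℝ} (hx0 : 0 ≤ x) (hx : x ≤ 1 / 2) (n : ℕ) :
    x ^ n / (1 - x) ≤ 2 * x ^ n := by
  rw [div_le_iff₀ (by linarith)]
  nlinarith [pow_nonneg hx0 n]

lemma abs_log_one_sub_le {x : ℝ} (hx : |x| ≤ 1 / 2) : |log (1 - x)| ≤ 2 * |x| := by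
  have h := abs_log_sub_add_sum_range_le (hx.trans_lt (by norm_num)) 0
  have hb := pow_div_one_sub_le_two_mul (abs_nonneg x) hx 1
  simp only [Finset.range_zero, Finset.sum_empty, zero_add, pow_one] at h hb
  exact h.trans hb

lemma abs_log_one_add_sub_log_one_sub_sub_le {t : ℝ} (ht : |t| ≤ 1 / 2) :
    |log (1 + t) - log (1 - t) - 2 * t| ≤ 4 * |t| ^ 3 := by
  have hlt : |t| < 1 := ht.trans_lt (by norm_num)
  have hp : |-t + t ^ 2 / 2 + log (1 + t)| ≤ |t| ^ 3 / (1 - |t|) := by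
    simpa [Finset.sum_range_succ, one_add_one_eq_two] using
      abs_log_sub_add_sum_range_le (x := -t) (by rwa [abs_neg]) 2
  have hm : |t + t ^ 2 / 2 + log (1 - t)| ≤ |t| ^ 3 / (1 - |t|) := by
    simpa [Finset.sum_range_succ, one_add_one_eq_two] using abs_log_sub_add_sum_range_le hlt 2
  have hb := pow_div_one_sub_le_two_mul (abs_nonneg t) ht 3
  calc |log (1 + t) - log (1 - t) - 2 * t|
      = |(-t + t ^ 2 / 2 + log (1 + t)) - (t + t ^ 2 / 2 + log (1 - t))| := by ring_nf
    _ ≤ |-t + t ^ 2 / 2 + log (1 + t)| + |t + t ^ 2 / 2 + log (1 - t)| := abs_sub _ _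
    _ ≤ 4 * |t| ^ 3 := by linarith

lemma abs_log_one_add_add_log_one_sub_le {t : ℝ} (ht : |t| ≤ 1 / 2) :
    |log (1 + t) + log (1 - t)| ≤ 2 * t ^ 2 := by
  have h1 := abs_le.mp ht
  rw [← log_mul (by linarith) (by linarith), show (1 + t) * (1 - t) = 1 - t ^ 2 by ring]
  have hsq : |t ^ 2| ≤ 1 / 2 := by
    rw [abs_pow]; nlinarith [abs_nonneg t]
  simpa [abs_pow, sq_abs] using abs_log_one_sub_le hsq

lemma log_mul_div_eq_log_add_log_div {r s K : ℝ} (hr : r ≠ 0) (hs : s ≠ 0) (hK : K ≠ 0) :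
    log (r * s / K) = log s + log (r / K) := by
  rw [mul_comm, mul_div_assoc, log_mul hs (div_ne_zero hr hK)]

lemma log_wedge_args {a y r K : ℝ} (hr : r ≠ 0) (hK : K ≠ 0) (ht : |a * y / r ^ 2| < 1) :
    log ((r - a * (y / r)) / K) = log (1 - a * y / r ^ 2) + log (r / K) ∧
      log ((r + a * (y / r)) / K) = log (1 + a * y / r ^ 2) + log (r / K) := by
  obtain ⟨ht₁, ht₂⟩ := abs_lt.mp ht
  constructor
  · rw [show r - a * (y / r) = r * (1 - a * y / r ^ 2) by field_simp]
    exact log_mul_div_eq_log_add_log_div hr (by linarith) hK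
  · rw [show r + a * (y / r) = r * (1 + a * y / r ^ 2) by field_simp]
    exact log_mul_div_eq_log_add_log_div hr (by linarith) hK

lemma abs_mul_div_sq_le {a y r : ℝ} (hr : 0 < r) (hy : |y| ≤ r) :
    |a * y / r ^ 2| ≤ |a| / r := by
  rw [abs_div, abs_mul, abs_of_pos (pow_pos hr 2), sq, ← div_div]
  gcongr
  rw [mul_div_assoc]
  exact mul_le_of_le_one_right (abs_nonneg a) ((div_le_one hr).mpr hy)

lemma abs_mul_le_of_abs_le_div {k E M r : ℝ} (hE : |E| ≤ M / r) :
    |k * E| ≤ M * (|k| + 1) / r :=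
  calc |k * E| = |k| * |E| := abs_mul _ _
    _ ≤ (|k| + 1) * (M / r) := by gcongr; linarith
    _ = M * (|k| + 1) / r := by ring

section WedgePair

variable {a r t : ℝ}

lemma abs_wedge_pair_x_remainder_le {x : ℝ} (hr : 0 < r) (hx : |x| ≤ r) (ha : 2 * |a| ≤ r)
    (ht : |t| ≤ |a| / r) :
    |x * (log (1 + t) - log (1 - t) - 2 * t)| ≤ 2 * a ^ 2 / r := by
  have hρ : |a| / r ≤ 1 / 2 := by rw [div_le_iff₀ hr]; linarith
  calc |x * (log (1 + t) - log (1 - t) - 2 * t)|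
      ≤ r * (4 * (|a| / r) ^ 3) := by
        rw [abs_mul]
        gcongr
        exact (abs_log_one_add_sub_log_one_sub_sub_le (ht.trans hρ)).trans (by gcongr)
    _ = 4 * (|a| / r) * (a ^ 2 / r) := by rw [← sq_abs a]; field_simp
    _ ≤ 2 * (a ^ 2 / r) := by gcongr; linarith
    _ = 2 * a ^ 2 / r := by ring

lemma abs_wedge_pair_y_remainder_le {y : ℝ} (hr : 0 < r) (hy : |y| ≤ r) (ha : 2 * |a| ≤ r)
    (ht : |t| ≤ |a| / r) :
    |y * (log (1 + t) - log (1 - t) - 2 * t) + a * (log (1 + t) + log (1 - t))| ≤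
      3 * a ^ 2 / r := by
  have hρ : |a| / r ≤ 1 / 2 := by rw [div_le_iff₀ hr]; linarith
  calc |y * (log (1 + t) - log (1 - t) - 2 * t) + a * (log (1 + t) + log (1 - t))|
      ≤ 2 * a ^ 2 / r + |a| * (2 * (|a| / r) ^ 2) := by
        refine (abs_add_le _ _).trans
          (add_le_add (abs_wedge_pair_x_remainder_le hr hy ha ht) ?_)
        rw [abs_mul]
        gcongr
        exact (abs_log_one_add_add_log_one_sub_le (ht.trans hρ)).trans
          (by rw [← sq_abs t]; gcongr)
    _ = 2 * a ^ 2 / r + 2 * (|a| / r) * (a ^ 2 / r) := by rw [← sq_abs a]; field_simp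
    _ ≤ 2 * a ^ 2 / r + 1 * (a ^ 2 / r) := by gcongr; linarith
    _ = 3 * a ^ 2 / r := by ring

end WedgePair

lemma wedge_pair_x_sub_edge {θ c a x y r φ ℓ Lp Lm : ℝ} (hr : r ≠ 0) :
    -θ * (c * x * (Lm + ℓ) - (y - a) * (φ - a * (x / r) / r))
      + θ * (c * x * (Lp + ℓ) - (y + a) * (φ + a * (x / r) / r))
      - -2 * a * θ * (φ + (1 - c) * (x * y / r ^ 2))
      = θ * c * (x * (Lp - Lm - 2 * (a * y / r ^ 2))) := by
  field_simp
  ring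

lemma wedge_pair_y_sub_edge {θ c a x y r φ ℓ Lp Lm : ℝ} (hr : r ≠ 0)
    (hxy : x ^ 2 + y ^ 2 = r ^ 2) :
    -θ * (c * (y - a) * (Lm + ℓ) + x * (φ - a * (x / r) / r))
      + θ * (c * (y + a) * (Lp + ℓ) + x * (φ + a * (x / r) / r))
      - (-(-2 * a * θ) * (c * ℓ + (1 - c) * (x ^ 2 / r ^ 2)) + 2 * a * c * θ)
      = θ * c * (y * (Lp - Lm - 2 * (a * y / r ^ 2)) + a * (Lp + Lm)) := by
  field_simp
  linear_combination (2 * a * c * θ) * hxy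

theorem stmt18_general (σ R a θ : ℝ) (hσ2 : σ < 1/2) (hR : 0 < R) (ha : 0 < a) :
    let c := (1 - 2*σ) / (2 * (1 - σ))
    let b := -2 * a * θ
    ∃ v Cb K : ℝ, 0 < Cb ∧ 0 < K ∧
      ∀ x y : ℝ, 0 < x → K ≤ Real.sqrt (x^2 + y^2) →
        let r := Real.sqrt (x^2 + y^2)
        let φ := Real.arctan (y/x)
        let sφ := y/r
        let cφ := x/r
        let u1x := -θ * (c * x * Real.log ((r - a*sφ) / (Real.exp 1 * R))
          - (y - a) * (φ - a*cφ/r))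
        let u1y := -θ * (c * (y - a) * Real.log ((r - a*sφ) / (Real.exp 1 * R))
          + x * (φ - a*cφ/r))
        let u2x := θ * (c * x * Real.log ((r + a*sφ) / (Real.exp 1 * R))
          - (y + a) * (φ + a*cφ/r))
        let u2y := θ * (c * (y + a) * Real.log ((r + a*sφ) / (Real.exp 1 * R))
          + x * (φ + a*cφ/r))
        let ux := b * (Real.arctan (y/x) + 1/(2*(1 - σ)) * (x*y/(x^2 + y^2)))
        let uy := -b * (c * Real.log (r / (Real.exp 1 * R))
          + 1/(2*(1 - σ)) * (x^2/(x^2 + y^2)))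
        |u1x + u2x - ux| ≤ Cb / r ∧ |u1y + u2y - (uy + v)| ≤ Cb / r := by
  intro c b
  have hc : 1 / (2 * (1 - σ)) = 1 - c := by
    have : 1 - σ ≠ 0 := by linarith
    simp only [c]; field_simp; ring
  refine ⟨2 * a * c * θ, 3 * a ^ 2 * (|θ * c| + 1), 2 * a, by positivity, by positivity, ?_⟩
  intro x y hx hK
  set r := √(x ^ 2 + y ^ 2)
  have hr : 0 < r := by linarith
  have hxy : x ^ 2 + y ^ 2 = r ^ 2 := (sq_sqrt (by positivity)).symm
  have hxr : |x| ≤ r := abs_le_sqrt (by nlinarith)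
  have hyr : |y| ≤ r := abs_le_sqrt (by nlinarith)
  have har : 2 * |a| ≤ r := by rwa [abs_of_pos ha]
  have ht : |a * y / r ^ 2| ≤ |a| / r := abs_mul_div_sq_le hr hyr
  obtain ⟨hm, hp⟩ := log_wedge_args hr.ne' (by positivity : rexp 1 * R ≠ 0)
    (ht.trans_lt ((div_lt_one hr).mpr (by linarith)))
  simp only [b]
  rw [hc, hxy, hm, hp, wedge_pair_x_sub_edge hr.ne', wedge_pair_y_sub_edge hr.ne' hxy]
  refine ⟨abs_mul_le_of_abs_le_div ?_,
    abs_mul_le_of_abs_le_div (abs_wedge_pair_y_remainder_le hr hyr har ht)⟩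
  exact (abs_wedge_pair_x_remainder_le hr hxr har ht).trans (by gcongr; norm_num)

/-- The sum of the (first-order) displacement fields of two wedge dislocations with
deficit angles `±θ` located at `(0, ±a)` equals, to first order in `a/r` (the fields are
already first order in `θ`) and up to a constant translation `v` along the `y` axis, the
edge-dislocation field with Burgers vector `b = −2aθ`:
`u_x = b[arctan(y/x) + xy/(2(1−σ)(x²+y²))]`,
`u_y = −b[((1−2σ)/(2(1−σ))) ln(r/(eR)) + x²/(2(1−σ)(x²+y²))]`.
The error is bounded by `C/r` far from the dislocation dipole. -/
theorem stmt18 (σ R a θ : ℝ) (hσ1 : -1 ≤ σ) (hσ2 : σ < 1/2) (hR : 0 < R) (ha : 0 < a) :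
    let c := (1 - 2*σ) / (2 * (1 - σ))
    let b := -2 * a * θ
    ∃ v Cb K : ℝ, 0 < Cb ∧ 0 < K ∧
      ∀ x y : ℝ, 0 < x → K ≤ Real.sqrt (x^2 + y^2) →
        let r := Real.sqrt (x^2 + y^2)
        let φ := Real.arctan (y/x)
        let sφ := y/r
        let cφ := x/r
        let u1x := -θ * (c * x * Real.log ((r - a*sφ) / (Real.exp 1 * R))
          - (y - a) * (φ - a*cφ/r))
        let u1y := -θ * (c * (y - a) * Real.log ((r - a*sφ) / (Real.exp 1 * R))
          + x * (φ - a*cφ/r))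
        let u2x := θ * (c * x * Real.log ((r + a*sφ) / (Real.exp 1 * R))
          - (y + a) * (φ + a*cφ/r))
        let u2y := θ * (c * (y + a) * Real.log ((r + a*sφ) / (Real.exp 1 * R))
          + x * (φ + a*cφ/r))
        let ux := b * (Real.arctan (y/x) + 1/(2*(1 - σ)) * (x*y/(x^2 + y^2)))
        let uy := -b * (c * Real.log (r / (Real.exp 1 * R))
          + 1/(2*(1 - σ)) * (x^2/(x^2 + y^2)))
        |u1x + u2x - ux| ≤ Cb / r ∧ |u1y + u2y - (uy + v)| ≤ Cb / r :=
  stmt18_general σ R a θ hσ2 hR ha
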